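/- In the 3×3 Attack-Defense game with λ > 1/3, the strategy profile (Y, Y) is a λ-power-regularized Nash equilibrium: neither player can increase their power-regularized utility by a unilateral deviation. -/
import Mathlib


/-- Row payoffs u₁ of the Attack-Defense game: actions 0 = X, 1 = Y, 2 = Z.
Player 2's payoff is u₂(a,b) = u₁(b,a). -/
def adPayoff : Fin 3 → Fin 3 → ℝ := ![![3, 3, 0], ![2, 2, 2], ![0, 0, 0]]

/-- Player 1's power-regularized utility at profile (a,b):
u₁(a,b) − λ·(u₁(a,b) − min_{b'} u₁(a,b')). -/
noncomputable def prUtil1 (lam : ℝ) (a b : Fin 3) : ℝ :=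
  adPayoff a b - lam * (adPayoff a b - Finset.univ.inf' Finset.univ_nonempty (adPayoff a))

/-- Player 2's power-regularized utility at profile (a,b), symmetric to player 1's. -/
noncomputable def prUtil2 (lam : ℝ) (a b : Fin 3) : ℝ := prUtil1 lam b a

lemma inf3 (f : Fin 3 → ℝ) : Finset.univ.inf' Finset.univ_nonempty f =
    min (f 0) (min (f 1) (f 2)) := by
  apply le_antisymm
  · exact le_min (Finset.inf'_le _ (by simp))
      (le_min (Finset.inf'_le _ (by simp)) (Finset.inf'_le _ (by simp)))
  · apply Finset.le_inf'
    intro b _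
    fin_cases b <;> simp [min_le_iff]

/-- In the Attack-Defense game with λ > 1/3, the profile (Y, Y) is a
λ-power-regularized Nash equilibrium: no unilateral deviation improves either
player's power-regularized utility. -/
theorem YY_is_power_regularized_nash (lam : ℝ) (hlam : 1 / 3 < lam) :
    (∀ a : Fin 3, prUtil1 lam a 1 ≤ prUtil1 lam 1 1) ∧
    (∀ b : Fin 3, prUtil2 lam 1 b ≤ prUtil2 lam 1 1) := by
  constructor <;> intro a <;> fin_cases a <;>
    simp [prUtil1, prUtil2, inf3, adPayoff] <;> nlinarith
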